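/- arXiv:0812.2968 — 2 statements merged into one kernel-verified Lean document; each statement's English description precedes it below -/
import Mathlib

section
/- Let r, n be positive integers and let S_k be the simple symmetric random walk on ℤ started at 0 (steps ±1 with probability 1/2). Then P{|S_k| ≤ r for all k = 1, …, 2n, and S_{2n} = 0} ≤ (cos(π/(2(r+1))))^{2n}. -/
/-!
Weight each path `ε` by `φ(S_k)`, where `φ(x) = cos(πx / (2(r+1)))`, as long as it has stayed in
`[-r, r]`. Averaging over the sign of step `k + 1` applies the operator
`ψ ↦ (ψ(· + 1) + ψ(· - 1)) / 2`, for which `φ` is an eigenfunction with eigenvalue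
`cos(π / (2(r+1)))`, and a path leaving the strip lands at `±(r+1)`, where `φ ≥ 0`, so dropping
it can only decrease the total weight. Hence the total weight shrinks by that eigenvalue at every
step, and since `φ(0) = 1` it bounds the number of confined paths returning to `0`.
-/

open scoped Classical

open Finset

namespace ConfinedWalk

variable {N : ℕ}

def step (b : Bool) : ℤ := if b then 1 else -1

lemma abs_step (b : Bool) : |step b| = 1 := by
  cases b <;> simp [step]

def partialSum (ε : Fin N → Bool) (k : ℕ) : ℤ :=
  ∑ i ∈ univ.filter (fun i : Fin N => (i : ℕ) < k), step (ε i)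

@[simp]
lemma partialSum_zero (ε : Fin N → Bool) : partialSum ε 0 = 0 := by
  simp [partialSum]

lemma partialSum_succ (ε : Fin N → Bool) {k : ℕ} (hk : k < N) :
    partialSum ε (k + 1) = partialSum ε k + step (ε ⟨k, hk⟩) := by
  have hsplit : univ.filter (fun i : Fin N => (i : ℕ) < k + 1) =
      insert ⟨k, hk⟩ (univ.filter (fun i : Fin N => (i : ℕ) < k)) := by
    ext i
    simp only [mem_filter, mem_univ, true_and, mem_insert, Fin.ext_iff]
    omega
  rw [partialSum, hsplit, sum_insert (by simp), add_comm]
  rfl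

lemma partialSum_eq_sum (ε : Fin N → Bool) : partialSum ε N = ∑ i, step (ε i) := by
  simp [partialSum]

lemma partialSum_congr {ε ε' : Fin N → Bool} {k : ℕ}
    (h : ∀ i : Fin N, (i : ℕ) < k → ε i = ε' i) : partialSum ε k = partialSum ε' k :=
  sum_congr rfl fun i hi => by rw [h i (mem_filter.mp hi).2]

def IsConfined (r : ℕ) (ε : Fin N → Bool) (k : ℕ) : Prop :=
  ∀ j, 1 ≤ j → j ≤ k → |partialSum ε j| ≤ r

variable {r : ℕ} {ε : Fin N → Bool} {k : ℕ}

lemma isConfined_zero (r : ℕ) (ε : Fin N → Bool) : IsConfined r ε 0 :=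
  fun _ h1 h0 => absurd (h1.trans h0) (by omega)

lemma IsConfined.mono {l : ℕ} (h : IsConfined r ε l) (hkl : k ≤ l) : IsConfined r ε k :=
  fun j h1 hj => h j h1 (hj.trans hkl)

lemma IsConfined.abs_partialSum_le (h : IsConfined r ε k) : |partialSum ε k| ≤ r := by
  cases k with
  | zero => simp
  | succ m => exact h (m + 1) (by omega) le_rfl

lemma IsConfined.abs_partialSum_succ_le (h : IsConfined r ε k) (hk : k < N) :
    |partialSum ε (k + 1)| ≤ r + 1 := by
  rw [partialSum_succ ε hk]
  calc |partialSum ε k + step (ε ⟨k, hk⟩)|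
      ≤ |partialSum ε k| + |step (ε ⟨k, hk⟩)| := abs_add_le _ _
    _ ≤ r + 1 := by rw [abs_step]; linarith [h.abs_partialSum_le]

def flipAt (i : Fin N) (ε : Fin N → Bool) : Fin N → Bool :=
  Function.update ε i (!ε i)

lemma flipAt_involutive (i : Fin N) : Function.Involutive (flipAt i) := by
  intro ε
  simp [flipAt]

lemma step_flipAt_self (i : Fin N) (ε : Fin N → Bool) : step (flipAt i ε i) = -step (ε i) := by
  cases h : ε i <;> simp [flipAt, step, h]

lemma partialSum_flipAt_of_le (i : Fin N) (ε : Fin N → Bool) (hk : k ≤ i) :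
    partialSum (flipAt i ε) k = partialSum ε k :=
  partialSum_congr fun j hj => Function.update_of_ne (by rintro rfl; omega) _ _

lemma isConfined_flipAt_iff_of_le (i : Fin N) (ε : Fin N → Bool) (hk : k ≤ i) :
    IsConfined r (flipAt i ε) k ↔ IsConfined r ε k :=
  forall₂_congr fun j _ => imp_congr_right fun hj => by
    rw [partialSum_flipAt_of_le i ε (hj.trans hk)]

section Eigenfunction

variable (r) (φ : ℤ → ℝ)

noncomputable def confinedWeight (N k : ℕ) : ℝ :=
  ∑ ε : Fin N → Bool, if IsConfined r ε k then φ (partialSum ε k) else 0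

variable {r φ}

lemma confinedWeight_zero : confinedWeight r φ N 0 = 2 ^ N * φ 0 := by
  simp [confinedWeight, isConfined_zero]

lemma confinedWeight_succ_le_sum (hφ : ∀ x : ℤ, |x| ≤ r + 1 → 0 ≤ φ x) (hk : k < N) :
    confinedWeight r φ N (k + 1) ≤
      ∑ ε : Fin N → Bool, if IsConfined r ε k then φ (partialSum ε (k + 1)) else 0 := by
  refine sum_le_sum fun ε _ => ?_
  by_cases hk1 : IsConfined r ε (k + 1)
  · simp [hk1, hk1.mono k.le_succ]
  by_cases hk0 : IsConfined r ε k
  · simpa [hk1, hk0] using hφ _ (hk0.abs_partialSum_succ_le hk)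
  · simp [hk1, hk0]

lemma add_step_add_add_neg_step {c : ℝ} (hφ : ∀ x, φ (x + 1) + φ (x - 1) = 2 * c * φ x)
    (x : ℤ) (b : Bool) : φ (x + step b) + φ (x + -step b) = 2 * c * φ x := by
  cases b
  · simpa [step, sub_eq_add_neg, add_comm] using hφ x
  · simpa [step, sub_eq_add_neg] using hφ x

lemma sum_confined_partialSum_succ {c : ℝ} (hφ : ∀ x, φ (x + 1) + φ (x - 1) = 2 * c * φ x)
    (hk : k < N) :
    (∑ ε : Fin N → Bool, if IsConfined r ε k then φ (partialSum ε (k + 1)) else 0) =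
      c * confinedWeight r φ N k := by
  set g : (Fin N → Bool) → ℝ := fun ε =>
    if IsConfined r ε k then φ (partialSum ε (k + 1)) else 0
  let i : Fin N := ⟨k, hk⟩
  -- Pairing each path with the one whose `(k+1)`-st step is reversed averages `φ` over `S_k ± 1`.
  have hpair : ∀ ε, g ε + g (flipAt i ε) =
      2 * c * if IsConfined r ε k then φ (partialSum ε k) else 0 := by
    intro ε
    simp only [g]
    rw [isConfined_flipAt_iff_of_le i ε le_rfl, partialSum_succ _ hk, partialSum_succ _ hk,
      partialSum_flipAt_of_le i ε le_rfl]
    split_ifs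
    · exact (step_flipAt_self i ε).symm ▸ add_step_add_add_neg_step hφ _ _
    · simp
  have hflip : ∑ ε, g (flipAt i ε) = ∑ ε, g ε :=
    Equiv.sum_comp ((flipAt_involutive i).toPerm _) g
  have hsum : ∑ ε, (g ε + g (flipAt i ε)) = 2 * c * confinedWeight r φ N k := by
    rw [confinedWeight, mul_sum]
    exact sum_congr rfl fun ε _ => hpair ε
  rw [sum_add_distrib, hflip] at hsum
  linarith

lemma confinedWeight_succ_le {c : ℝ} (hφ : ∀ x, φ (x + 1) + φ (x - 1) = 2 * c * φ x)
    (hφ_nonneg : ∀ x : ℤ, |x| ≤ r + 1 → 0 ≤ φ x) (hk : k < N) :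
    confinedWeight r φ N (k + 1) ≤ c * confinedWeight r φ N k :=
  (confinedWeight_succ_le_sum hφ_nonneg hk).trans_eq (sum_confined_partialSum_succ hφ hk)

lemma confinedWeight_le_pow {c : ℝ} (hc : 0 ≤ c)
    (hφ : ∀ x, φ (x + 1) + φ (x - 1) = 2 * c * φ x)
    (hφ_nonneg : ∀ x : ℤ, |x| ≤ r + 1 → 0 ≤ φ x) (hk : k ≤ N) :
    confinedWeight r φ N k ≤ c ^ k * (2 ^ N * φ 0) := by
  induction k with
  | zero => simp [confinedWeight_zero]
  | succ k ih =>
    calc confinedWeight r φ N (k + 1) ≤ c * confinedWeight r φ N k :=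
          confinedWeight_succ_le hφ hφ_nonneg hk
      _ ≤ c * (c ^ k * (2 ^ N * φ 0)) := by gcongr; exact ih (by omega)
      _ = c ^ (k + 1) * (2 ^ N * φ 0) := by ring

lemma card_confined_return_mul_le (hφ_nonneg : ∀ x : ℤ, |x| ≤ r + 1 → 0 ≤ φ x) :
    #{ε : Fin N → Bool | IsConfined r ε N ∧ ∑ i, step (ε i) = 0} * φ 0 ≤
      confinedWeight r φ N N := by
  rw [card_filter, Nat.cast_sum, sum_mul, confinedWeight]
  refine sum_le_sum fun ε _ => ?_
  by_cases hconf : IsConfined r ε N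
  · by_cases hret : ∑ i, step (ε i) = 0
    · simp [hconf, hret, partialSum_eq_sum]
    · simpa [hconf, hret] using hφ_nonneg _ (by linarith [hconf.abs_partialSum_le])
  · simp [hconf]

end Eigenfunction

noncomputable def groundState (r : ℕ) (x : ℤ) : ℝ :=
  Real.cos (Real.pi / (2 * (r + 1)) * x)

@[simp]
lemma groundState_zero (r : ℕ) : groundState r 0 = 1 := by
  simp [groundState]

lemma groundState_add_one_add_sub_one (r : ℕ) (x : ℤ) :
    groundState r (x + 1) + groundState r (x - 1) =
      2 * Real.cos (Real.pi / (2 * (r + 1))) * groundState r x := by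
  rw [groundState, groundState, groundState, Real.cos_add_cos]
  push_cast
  ring_nf

lemma groundState_nonneg {r : ℕ} {x : ℤ} (hx : |x| ≤ r + 1) : 0 ≤ groundState r x := by
  have hxr : |(x : ℝ)| ≤ r + 1 := by exact_mod_cast hx
  have hangle : |Real.pi / (2 * (r + 1)) * x| ≤ Real.pi / 2 := by
    rw [abs_mul, abs_of_pos (by positivity)]
    calc Real.pi / (2 * (r + 1)) * |(x : ℝ)| ≤ Real.pi / (2 * (r + 1)) * (r + 1) := by gcongr
      _ = Real.pi / 2 := by field_simp
  rw [groundState, ← Real.cos_abs]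
  exact Real.cos_nonneg_of_neg_pi_div_two_le_of_le
    ((neg_nonpos.mpr Real.pi_div_two_pos.le).trans (abs_nonneg _)) hangle

end ConfinedWalk

open ConfinedWalk in
theorem confined_walk_return_bound_general (r n : ℕ) :
    ((Finset.univ.filter (fun ε : Fin (2 * n) → Bool =>
        (∀ k : ℕ, 1 ≤ k → k ≤ 2 * n →
          |∑ i ∈ Finset.univ.filter (fun i : Fin (2 * n) => (i : ℕ) < k),
              (if ε i then (1:ℤ) else -1)| ≤ r) ∧
        (∑ i : Fin (2 * n), (if ε i then (1:ℤ) else -1)) = 0)).card : ℝ)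
        / 2 ^ (2 * n)
      ≤ Real.cos (Real.pi / (2 * (r + 1))) ^ (2 * n) := by
  have hφ_nonneg : ∀ x : ℤ, |x| ≤ r + 1 → 0 ≤ groundState r x :=
    fun _ => groundState_nonneg
  have hc : 0 ≤ Real.cos (Real.pi / (2 * (r + 1))) := by
    simpa [groundState] using hφ_nonneg 1 (by simp)
  rw [div_le_iff₀ (by positivity)]
  calc _ = (#{ε : Fin (2 * n) → Bool | IsConfined r ε (2 * n) ∧ ∑ i, step (ε i) = 0} : ℝ)
          * groundState r 0 := by
        rw [groundState_zero, mul_one]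
        congr
    _ ≤ confinedWeight r (groundState r) (2 * n) (2 * n) :=
        card_confined_return_mul_le hφ_nonneg
    _ ≤ _ := by
        simpa using confinedWeight_le_pow hc (groundState_add_one_add_sub_one r) hφ_nonneg le_rfl

/-- The probability that a simple symmetric random walk stays in `[-r, r]` for
`2n` steps and returns to `0` is at most `cos(π/(2(r+1)))^{2n}`. -/
theorem confined_walk_return_bound (r n : ℕ) (hr : 1 ≤ r) (hn : 1 ≤ n) :
    ((Finset.univ.filter (fun ε : Fin (2 * n) → Bool =>
        (∀ k : ℕ, 1 ≤ k → k ≤ 2 * n →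
          |∑ i ∈ Finset.univ.filter (fun i : Fin (2 * n) => (i : ℕ) < k),
              (if ε i then (1:ℤ) else -1)| ≤ r) ∧
        (∑ i : Fin (2 * n), (if ε i then (1:ℤ) else -1)) = 0)).card : ℝ)
        / 2 ^ (2 * n)
      ≤ Real.cos (Real.pi / (2 * (r + 1))) ^ (2 * n) :=
  confined_walk_return_bound_general r n
end

section
/- Let σ > 1, c > 0 and d ≥ 1. Then there exist constants C, c₁ > 0 such that for all sufficiently large t, ∫_{log 2}^∞ z^{d−1} e^{−z − c t z^{1−σ}} dz ≤ C t^{(2d−1)/(2σ)} e^{−c₁ t^{1/σ}}. -/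
/-!
Pointwise in `z`, compare with `t^{1/σ}`: if `z ≥ t^{1/σ}` the term `z` is large, otherwise
`c t z^{1-σ} ≥ c t (t^{1/σ})^{1-σ} = c t^{1/σ}`. So the exponent `z + c t z^{1-σ}` is at least
`min 1 c · t^{1/σ}`, and averaging with `z` gives `z + c t z^{1-σ} ≥ z / 2 + (min 1 c / 2) t^{1/σ}`.
The remaining factor `e^{-z/2}` keeps the integral finite, uniformly in `t`.
-/

open MeasureTheory Real Set

lemma mul_rpow_one_div_rpow_one_sub {t : ℝ} (ht : 0 < t) {σ : ℝ} (hσ : σ ≠ 0) :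
    t * (t ^ (1 / σ)) ^ (1 - σ) = t ^ (1 / σ) := by
  have hexp : 1 + 1 / σ * (1 - σ) = 1 / σ := by field_simp; ring
  rw [← rpow_mul ht.le, ← rpow_one_add' ht.le (by rw [hexp]; exact one_div_ne_zero hσ), hexp]

lemma min_one_mul_rpow_one_div_le_add {σ c t z : ℝ} (hσ : 1 ≤ σ) (hc : 0 ≤ c) (ht : 0 < t)
    (hz : 0 < z) : min 1 c * t ^ (1 / σ) ≤ z + c * t * z ^ (1 - σ) := by
  have ha : 0 ≤ t ^ (1 / σ) := rpow_nonneg ht.le _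
  rcases le_or_gt (t ^ (1 / σ)) z with hle | hlt
  · have : 0 ≤ c * t * z ^ (1 - σ) := by positivity
    nlinarith [min_le_left 1 c]
  · calc min 1 c * t ^ (1 / σ) ≤ c * t ^ (1 / σ) := by gcongr; exact min_le_right 1 c
      _ = c * (t * (t ^ (1 / σ)) ^ (1 - σ)) := by
        rw [mul_rpow_one_div_rpow_one_sub ht (zero_lt_one.trans_le hσ).ne']
      _ ≤ c * (t * z ^ (1 - σ)) := by
        have := rpow_le_rpow_of_nonpos hz hlt.le (by linarith : 1 - σ ≤ 0)
        gcongr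
      _ ≤ z + c * t * z ^ (1 - σ) := by linarith

lemma exp_neg_add_mul_rpow_le {σ c t z : ℝ} (hσ : 1 ≤ σ) (hc : 0 ≤ c) (ht : 0 < t)
    (hz : 0 < z) :
    exp (-z - c * t * z ^ (1 - σ)) ≤ exp (-(1 / 2) * z) * exp (-(min 1 c / 2) * t ^ (1 / σ)) := by
  have hmin := min_one_mul_rpow_one_div_le_add hσ hc ht hz
  have : 0 ≤ c * t * z ^ (1 - σ) := by positivity
  rw [← exp_add]
  gcongr
  linarith

lemma setIntegral_Ioi_rpow_mul_exp_le {σ c t s a : ℝ} (hσ : 1 ≤ σ) (hc : 0 ≤ c) (ht : 0 < t)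
    (hs : -1 < s) (ha : 0 ≤ a) :
    ∫ z in Ioi a, z ^ s * exp (-z - c * t * z ^ (1 - σ))
      ≤ (∫ z in Ioi a, z ^ s * exp (-(1 / 2) * z)) * exp (-(min 1 c / 2) * t ^ (1 / σ)) := by
  have hmajorant : IntegrableOn (fun z ↦ z ^ s * exp (-(1 / 2) * z)) (Ioi a) := by
    have := integrableOn_rpow_mul_exp_neg_mul_rpow hs one_pos (by norm_num : (0 : ℝ) < 1 / 2)
    simp only [rpow_one] at this
    exact this.mono_set (Ioi_subset_Ioi ha)
  rw [← integral_mul_const]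
  refine integral_mono_of_nonneg ?_ (hmajorant.mul_const _) ?_
  all_goals
    filter_upwards [self_mem_ae_restrict measurableSet_Ioi] with z hz
    have hz : 0 < z := ha.trans_lt hz
  · positivity
  · rw [mul_assoc (z ^ s)]
    gcongr
    exact exp_neg_add_mul_rpow_le hσ hc ht hz

/-- Laplace-method upper bound: for `σ > 1`, `c > 0`, `d ≥ 1`,
`∫_{log 2}^∞ z^{d-1} e^{-z - c t z^{1-σ}} dz ≤ C t^{(2d-1)/(2σ)} e^{-c₁ t^{1/σ}}`
for large `t`. -/
theorem laplace_method_bound (σ c : ℝ) (d : ℕ) (hσ : 1 < σ) (hc : 0 < c) (hd : 1 ≤ d) :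
    ∃ C > (0:ℝ), ∃ c₁ > (0:ℝ), ∃ t₀ > (0:ℝ), ∀ t : ℝ, t₀ ≤ t →
      ∫ z in Set.Ioi (Real.log 2),
          z ^ ((d:ℝ) - 1) * Real.exp (-z - c * t * z ^ (1 - σ))
        ≤ C * t ^ ((2 * (d:ℝ) - 1) / (2 * σ)) * Real.exp (-c₁ * t ^ (1 / σ)) := by
  have hd_real : (1 : ℝ) ≤ d := by exact_mod_cast hd
  set I := ∫ z in Ioi (log 2), z ^ ((d : ℝ) - 1) * exp (-(1 / 2) * z)
  have hI : 0 ≤ I := setIntegral_nonneg measurableSet_Ioi fun z hz ↦ by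
    have : 0 < z := (log_pos one_lt_two).trans hz
    positivity
  refine ⟨I + 1, by positivity, min 1 c / 2, by positivity, 1, one_pos, fun t ht ↦ ?_⟩
  have hpow : 1 ≤ t ^ ((2 * (d : ℝ) - 1) / (2 * σ)) :=
    one_le_rpow ht (div_nonneg (by linarith) (by linarith))
  calc _ ≤ I * exp (-(min 1 c / 2) * t ^ (1 / σ)) :=
        setIntegral_Ioi_rpow_mul_exp_le hσ.le hc.le (by linarith) (by linarith)
          (log_pos one_lt_two).le
    _ ≤ (I + 1) * t ^ ((2 * (d : ℝ) - 1) / (2 * σ)) * exp (-(min 1 c / 2) * t ^ (1 / σ)) := by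
        gcongr
        nlinarith
end
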